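/- If u is a φ-thread, n := φ(û) is not in dom(u), and x : X, then u ⊕ (n, x) is also a φ-thread, i.e. S_φ(u) and φ(û) ∉ dom(u) imply S_φ(u ⊕ (φ(û), x)). -/

import Mathlib

open scoped Classical

universe u

/-- Domain of a partial function `ℕ → Option X`. -/
def dom {X : Type u} (f : ℕ → Option X) : Set ℕ := {n | f n ≠ none}

/-- Canonical total extension of a partial function by a default element. -/
def ext {X : Type u} (x0 : X) (f : ℕ → Option X) : ℕ → X := fun n => (f n).getD x0

/-- The partial function defined only at `n`, with value `x`. -/
def single {X : Type u} (n : ℕ) (x : X) : ℕ → Option X :=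
  fun m => if m = n then some x else none

/-- Left-biased merge `u @ v` of two partial functions. -/
def merge {X : Type u} (f g : ℕ → Option X) : ℕ → Option X :=
  fun n => (f n).elim (g n) some

/-- Update `u ⊕ (n, x)`: keeps `u`'s value where defined, adds `x` at `n`. -/
def upd {X : Type u} (f : ℕ → Option X) (n : ℕ) (x : X) : ℕ → Option X :=
  merge f (single n x)

/-- Extension order `u ⊑ v`. -/
def sub {X : Type u} (f g : ℕ → Option X) : Prop :=
  ∀ n x, f n = some x → g n = some x

/-- The φ-thread of a partial function `u` of length `i`. -/
def threadP {X : Type u} (x0 : X) (φ : (ℕ → X) → ℕ) (f : ℕ → Option X) :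
    ℕ → ℕ → Option X
  | 0 => fun _ => none
  | i + 1 =>
    let v := threadP x0 φ f i
    let n := φ (ext x0 v)
    match f n with
    | some x => upd v n x
    | none => v

/-- The φ-thread of a total function `α` of length `i`. -/
def threadT {X : Type u} (x0 : X) (φ : (ℕ → X) → ℕ) (α : ℕ → X) :
    ℕ → ℕ → Option X
  | 0 => fun _ => none
  | i + 1 =>
    let v := threadT x0 φ α i
    let n := φ (ext x0 v)
    upd v n (α n)

/-- `S_φ(u)`: `u` is a φ-thread. -/
def isThread {X : Type u} (x0 : X) (φ : (ℕ → X) → ℕ) (f : ℕ → Option X) : Prop :=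
  f = threadP x0 φ f (dom f).ncard

/-- Bounded search: least `i ≤ b` with `p i`, else `b`. -/
noncomputable def mu (b : ℕ) (p : ℕ → Prop) : ℕ :=
  if h : ∃ i, i ≤ b ∧ p i then Nat.find h else b

lemma threadP_succ {X : Type u} (x0 : X) (φ : (ℕ → X) → ℕ) (f : ℕ → Option X) (i : ℕ) :
    threadP x0 φ f (i + 1) =
      match f (φ (ext x0 (threadP x0 φ f i))) with
      | some x => upd (threadP x0 φ f i) (φ (ext x0 (threadP x0 φ f i))) x
      | none => threadP x0 φ f i := rfl

lemma upd_apply_ne {X : Type u} (f : ℕ → Option X) (n : ℕ) (x : X) {m : ℕ} (h : m ≠ n) :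
    upd f n x m = f m := by
  cases hf : f m <;> simp [upd, merge, single, h, hf]

lemma upd_apply_self {X : Type u} {f : ℕ → Option X} (n : ℕ) (x : X) (h : f n = none) :
    upd f n x n = some x := by
  simp [upd, merge, single, h]

lemma dom_upd {X : Type u} (f : ℕ → Option X) (n : ℕ) (x : X) :
    dom (upd f n x) = insert n (dom f) := by
  ext m
  rcases eq_or_ne m n with rfl | h
  · cases hf : f m <;> simp [dom, upd, merge, single, hf]
  · simp [dom, upd_apply_ne f n x h, h]

lemma dom_threadP_finite {X : Type u} (x0 : X) (φ : (ℕ → X) → ℕ) (f : ℕ → Option X) :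
    ∀ i, (dom (threadP x0 φ f i)).Finite := by
  intro i
  induction i with
  | zero => simp [threadP, dom]
  | succ i ih =>
    rw [threadP_succ]
    cases hf : f (φ (ext x0 (threadP x0 φ f i))) with
    | none => simpa using ih
    | some y => simp only [dom_upd]; exact ih.insert _

lemma ncard_dom_threadP_le {X : Type u} (x0 : X) (φ : (ℕ → X) → ℕ) (f : ℕ → Option X) :
    ∀ i, (dom (threadP x0 φ f i)).ncard ≤ i := by
  intro i
  induction i with
  | zero => simp [threadP, dom]
  | succ i ih =>
    rw [threadP_succ]
    cases hf : f (φ (ext x0 (threadP x0 φ f i))) with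
    | none => simpa using Nat.le_succ_of_le ih
    | some y =>
      simp only [dom_upd]
      calc (insert (φ (ext x0 (threadP x0 φ f i))) (dom (threadP x0 φ f i))).ncard
          ≤ (dom (threadP x0 φ f i)).ncard + 1 :=
            Set.ncard_insert_le _ _
        _ ≤ i + 1 := by omega

lemma threadP_stable {X : Type u} (x0 : X) (φ : (ℕ → X) → ℕ) (f : ℕ → Option X) (i : ℕ)
    (h : threadP x0 φ f (i + 1) = threadP x0 φ f i) :
    ∀ m, threadP x0 φ f (i + m) = threadP x0 φ f i := by
  intro m
  induction m with
  | zero => rfl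
  | succ m ih =>
    have : i + (m + 1) = (i + m) + 1 := by omega
    rw [this, threadP_succ, ih, ← threadP_succ, h]

theorem stmt6 {X : Type u} (x0 : X) (φ : (ℕ → X) → ℕ) (u : ℕ → Option X)
    (hfin : (dom u).Finite) (hSu : isThread x0 φ u)
    (hn : φ (ext x0 u) ∉ dom u) (x : X) :
    isThread x0 φ (upd u (φ (ext x0 u)) x) := by
  set n := φ (ext x0 u) with hn_def
  set k := (dom u).ncard with hk
  have hun : u n = none := by
    by_contra h; exact hn h
  set u' := upd u n x with hu'
  -- domain and cardinality of u'
  have hdom' : dom u' = insert n (dom u) := dom_upd u n x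
  have hcard' : (dom u').ncard = k + 1 := by
    rw [hdom', Set.ncard_insert_of_notMem hn hfin]
  -- the two threads agree up to k
  have key : ∀ i ≤ k, threadP x0 φ u' i = threadP x0 φ u i := by
    intro i hi
    induction i with
    | zero => rfl
    | succ i ih =>
      have ihe := ih (Nat.le_of_succ_le hi)
      set v := threadP x0 φ u i with hv
      set ni := φ (ext x0 v) with hni
      cases huni : u ni with
      | none =>
        -- stagnation: contradiction with cardinality
        exfalso
        have hstep : threadP x0 φ u (i + 1) = threadP x0 φ u i := by
          rw [threadP_succ, ← hv, ← hni, huni]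
        have hst := threadP_stable x0 φ u i hstep (k - i)
        have hik : i + (k - i) = k := by omega
        rw [hik] at hst
        have h1 : u = threadP x0 φ u k := hSu
        have h2 : u = threadP x0 φ u i := h1.trans hst
        have hle := ncard_dom_threadP_le x0 φ u i
        rw [← h2] at hle
        omega
      | some y =>
        have hne : ni ≠ n := by
          intro h; rw [h, hun] at huni; exact Option.some_ne_none y huni.symm
        have hu'ni : u' ni = u ni := upd_apply_ne u n x hne
        rw [threadP_succ, threadP_succ, ihe, ← hv, ← hni, hu'ni, huni]
  -- now compute the thread of u' of length k+1
  have hk_eq : threadP x0 φ u' k = u :=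
    (key k le_rfl).trans (hSu : u = threadP x0 φ u k).symm
  rw [isThread, hcard', threadP_succ, hk_eq, ← hn_def]
  have : u' n = some x := upd_apply_self n x hun
  rw [this]
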